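/- arXiv:1801.10604 — 4 statements merged into one kernel-verified Lean document; each statement's English description precedes it below -/
import Mathlib

section
/- The function f is Lipschitz with constant √(3/8): for all p, q ∈ ℝ², |f(p) − f(q)| ≤ √(3/8)·‖p − q‖, where ‖·‖ is the Euclidean norm on ℝ². -/
/-- `f(p₁,p₃) = (1/8)(√(8p₁² + 9p₃²) + p₃)`. -/
noncomputable def f (p₁ p₃ : ℝ) : ℝ := (1/8) * (Real.sqrt (8 * p₁^2 + 9 * p₃^2) + p₃)

lemma tri (x y u v : ℝ) :
    Real.sqrt (8 * x^2 + 9 * y^2) ≤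
      Real.sqrt (8 * u^2 + 9 * v^2) + Real.sqrt (8 * (x-u)^2 + 9 * (y-v)^2) := by
  have hA : (0:ℝ) ≤ 8 * u^2 + 9 * v^2 := by positivity
  have hB : (0:ℝ) ≤ 8 * (x-u)^2 + 9 * (y-v)^2 := by positivity
  have hAn := Real.sqrt_nonneg (8 * u^2 + 9 * v^2)
  have hBn := Real.sqrt_nonneg (8 * (x-u)^2 + 9 * (y-v)^2)
  have hA2 := Real.sq_sqrt hA
  have hB2 := Real.sq_sqrt hB
  rw [show Real.sqrt (8 * u^2 + 9 * v^2) + Real.sqrt (8 * (x-u)^2 + 9 * (y-v)^2)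
      = Real.sqrt ((Real.sqrt (8 * u^2 + 9 * v^2) + Real.sqrt (8 * (x-u)^2 + 9 * (y-v)^2))^2)
      from (Real.sqrt_sq (by positivity)).symm]
  apply Real.sqrt_le_sqrt
  set sA := Real.sqrt (8 * u^2 + 9 * v^2)
  set sB := Real.sqrt (8 * (x-u)^2 + 9 * (y-v)^2)
  nlinarith [sq_nonneg (u*(y-v) - v*(x-u)), mul_nonneg hAn hBn,
    sq_nonneg (sA*sB + (8*u*(x-u) + 9*v*(y-v))), sq_nonneg (sA*sB - (8*u*(x-u) + 9*v*(y-v)))]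

/-- `f` is Lipschitz with constant `√(3/8)` with respect to the Euclidean norm on `ℝ²`. -/
theorem stmt_2 (p q : EuclideanSpace ℝ (Fin 2)) :
    |f (p 0) (p 1) - f (q 0) (q 1)| ≤ Real.sqrt (3/8) * ‖p - q‖ := by
  have hnorm : ‖p - q‖ = Real.sqrt ((p 0 - q 0)^2 + (p 1 - q 1)^2) := by
    rw [EuclideanSpace.norm_eq]
    congr 1
    rw [Fin.sum_univ_two]
    simp [sq_abs]
  set a := p 0 - q 0 with ha
  set b := p 1 - q 1 with hb
  have h1 := tri (p 0) (p 1) (q 0) (q 1)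
  have h2 := tri (q 0) (q 1) (p 0) (p 1)
  have hflip : 8 * (q 0 - p 0)^2 + 9 * (q 1 - p 1)^2 = 8 * a^2 + 9 * b^2 := by
    rw [ha, hb]; ring
  rw [hflip] at h2
  rw [show 8 * (p 0 - q 0)^2 + 9 * (p 1 - q 1)^2 = 8 * a^2 + 9 * b^2 from rfl] at h1
  have hD : (0:ℝ) ≤ 8 * a^2 + 9 * b^2 := by positivity
  have hN : (0:ℝ) ≤ a^2 + b^2 := by positivity
  have hDn := Real.sqrt_nonneg (8 * a^2 + 9 * b^2)
  have hD2 := Real.sq_sqrt hD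
  have hNn := Real.sqrt_nonneg (a^2 + b^2)
  have hN2 := Real.sq_sqrt hN
  have hsn := Real.sqrt_nonneg (3/8 : ℝ)
  have hs2 := Real.sq_sqrt (by norm_num : (0:ℝ) ≤ 3/8)
  rw [hnorm]
  set sD := Real.sqrt (8 * a^2 + 9 * b^2)
  set sN := Real.sqrt (a^2 + b^2)
  set s3 := Real.sqrt (3/8 : ℝ)
  have hbabs : |b| ^ 2 = b ^ 2 := sq_abs b
  have habsb : (0:ℝ) ≤ |b| := abs_nonneg b
  have key : |f (p 0) (p 1) - f (q 0) (q 1)| ≤ (1/8) * (sD + |b|) := by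
    unfold f
    have : (1/8 : ℝ) * (Real.sqrt (8 * (p 0)^2 + 9 * (p 1)^2) + p 1)
        - (1/8) * (Real.sqrt (8 * (q 0)^2 + 9 * (q 1)^2) + q 1)
        = (1/8) * ((Real.sqrt (8 * (p 0)^2 + 9 * (p 1)^2)
            - Real.sqrt (8 * (q 0)^2 + 9 * (q 1)^2)) + b) := by
      rw [hb]; ring
    rw [this, abs_mul]
    have h8 : |(1/8 : ℝ)| = 1/8 := by norm_num
    rw [h8]
    have := abs_add_le (Real.sqrt (8 * (p 0)^2 + 9 * (p 1)^2)
        - Real.sqrt (8 * (q 0)^2 + 9 * (q 1)^2)) b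
    have habsd : |Real.sqrt (8 * (p 0)^2 + 9 * (p 1)^2)
        - Real.sqrt (8 * (q 0)^2 + 9 * (q 1)^2)| ≤ sD := by
      rw [abs_sub_le_iff]
      constructor <;> linarith
    nlinarith [this]
  have final : (1/8 : ℝ) * (sD + |b|) ≤ s3 * sN := by
    nlinarith [sq_nonneg (|b| - sD), sq_nonneg (s3 * sN + (1/8) * (sD + |b|)),
      mul_nonneg hsn hNn, mul_nonneg hDn habsb]
  linarith
end

section
/- The operator a is uniformly elliptic: for all p, q ∈ ℝ³ one has ⟨a(p) − a(q), p − q⟩ ≥ (1 − √(3/8))·‖p − q‖² and ‖a(p) − a(q)‖ ≤ 2·‖p − q‖, where ⟨·,·⟩ and ‖·‖ are the Euclidean inner product and norm on ℝ³. -/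
/-- `a(p₁,p₂,p₃) = (p₁, p₂, p₃ + f(p₁,p₃))` as a map of Euclidean `ℝ³`. -/
noncomputable def a3 (p : EuclideanSpace ℝ (Fin 3)) : EuclideanSpace ℝ (Fin 3) :=
  WithLp.toLp 2 ![p 0, p 1, p 2 + f (p 0) (p 2)]

lemma key (x z x' z' : ℝ) :
    Real.sqrt (8*x^2 + 9*z^2) ≤ Real.sqrt (8*x'^2 + 9*z'^2)
      + 3 * Real.sqrt ((x-x')^2 + (z-z')^2) := by
  set t := Real.sqrt (8*x'^2 + 9*z'^2) with htd
  set s := Real.sqrt ((x-x')^2 + (z-z')^2) with hsd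
  have ht0 : 0 ≤ t := Real.sqrt_nonneg _
  have hs0 : 0 ≤ s := Real.sqrt_nonneg _
  have ht : t^2 = 8*x'^2 + 9*z'^2 := Real.sq_sqrt (by positivity)
  have hs : s^2 = (x-x')^2 + (z-z')^2 := Real.sq_sqrt (by positivity)
  clear_value t s
  have hcs : (8*x'*(x-x') + 9*z'*(z-z'))^2 ≤ (3*t*s)^2 := by
    nlinarith [sq_nonneg (x'*(z-z') - z'*(x-x')), sq_nonneg (x'*(x-x')), sq_nonneg (z'*(x-x'))]
  have hc : 8*x'*(x-x') + 9*z'*(z-z') ≤ 3*t*s := by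
    calc 8*x'*(x-x') + 9*z'*(z-z') ≤ |8*x'*(x-x') + 9*z'*(z-z')| := le_abs_self _
      _ = Real.sqrt ((8*x'*(x-x') + 9*z'*(z-z'))^2) := (Real.sqrt_sq_eq_abs _).symm
      _ ≤ Real.sqrt ((3*t*s)^2) := Real.sqrt_le_sqrt hcs
      _ = 3*t*s := Real.sqrt_sq (by positivity)
  have h : Real.sqrt (8*x^2 + 9*z^2) ≤ Real.sqrt ((t + 3*s)^2) :=
    Real.sqrt_le_sqrt (by nlinarith [hc, ht, hs, sq_nonneg (x-x')])
  rwa [Real.sqrt_sq (by positivity)] at h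

lemma lip (x z x' z' : ℝ) :
    (f x z - f x' z')^2 ≤ (1/4) * ((x-x')^2 + (z-z')^2) := by
  set s := Real.sqrt ((x-x')^2 + (z-z')^2) with hsd
  have hs0 : 0 ≤ s := Real.sqrt_nonneg _
  have hs : s^2 = (x-x')^2 + (z-z')^2 := Real.sq_sqrt (by positivity)
  have h1 := key x z x' z'
  have h2 : Real.sqrt (8*x'^2 + 9*z'^2) ≤ Real.sqrt (8*x^2 + 9*z^2) + 3 * s := by
    have h := key x' z' x z
    have e : (x'-x)^2 + (z'-z)^2 = (x-x')^2 + (z-z')^2 := by ring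
    rwa [e] at h
  have h3 : |z - z'| ≤ s := by
    rw [← Real.sqrt_sq_eq_abs]
    exact Real.sqrt_le_sqrt (by nlinarith [sq_nonneg (x-x')])
  have h3' := abs_le.mp h3
  have habs : |f x z - f x' z'| ≤ (1/2) * s := by
    rw [abs_le]
    unfold f
    constructor
    · linarith [h2, h3'.1]
    · linarith [h1, h3'.2]
  clear_value s
  nlinarith [habs, abs_nonneg (f x z - f x' z'), sq_abs (f x z - f x' z')]

/-- `a` is uniformly elliptic: for all `p, q ∈ ℝ³`,
`⟨a(p) − a(q), p − q⟩ ≥ (1 − √(3/8))·‖p − q‖²` and `‖a(p) − a(q)‖ ≤ 2·‖p − q‖`. -/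
theorem stmt_3 (p q : EuclideanSpace ℝ (Fin 3)) :
    (1 - Real.sqrt (3/8)) * ‖p - q‖^2 ≤ (inner ℝ (a3 p - a3 q) (p - q) : ℝ) ∧
    ‖a3 p - a3 q‖ ≤ 2 * ‖p - q‖ := by
  set u := p 0 - q 0 with hu
  set v := p 1 - q 1 with hv
  set w := p 2 - q 2 with hw
  set d := f (p 0) (p 2) - f (q 0) (q 2) with hdd
  have hd : d^2 ≤ (1/4) * (u^2 + w^2) := lip (p 0) (p 2) (q 0) (q 2)
  have hinner : (inner ℝ (a3 p - a3 q) (p - q) : ℝ) = u^2 + v^2 + (w + d) * w := by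
    simp [a3, PiLp.inner_apply, Fin.sum_univ_three, PiLp.sub_apply, hu, hv, hw, hdd]
    ring
  have hn1 : ‖p - q‖^2 = u^2 + v^2 + w^2 := by
    rw [EuclideanSpace.norm_eq, Real.sq_sqrt (by positivity)]
    simp [Fin.sum_univ_three, PiLp.sub_apply, sq_abs, hu, hv, hw]
  have hn2 : ‖a3 p - a3 q‖^2 = u^2 + v^2 + (w + d)^2 := by
    rw [EuclideanSpace.norm_eq, Real.sq_sqrt (by positivity)]
    simp [a3, Fin.sum_univ_three, PiLp.sub_apply, sq_abs, hu, hv, hw, hdd]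
    ring
  have hr0 : 0 ≤ Real.sqrt (3/8) := Real.sqrt_nonneg _
  have hr : (1/2 : ℝ) ≤ Real.sqrt (3/8) := by
    nlinarith [Real.sq_sqrt (show (0:ℝ) ≤ 3/8 by norm_num), hr0]
  clear_value u v w d
  constructor
  · rw [hinner, hn1]
    nlinarith [hd, hr, sq_nonneg (w + 2*d), sq_nonneg u, sq_nonneg v, sq_nonneg w,
      mul_nonneg (by linarith : (0:ℝ) ≤ Real.sqrt (3/8) - 1/2)
        (by positivity : (0:ℝ) ≤ u^2 + v^2 + w^2)]
  · have h4 : ‖a3 p - a3 q‖^2 ≤ (2 * ‖p - q‖)^2 := by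
      rw [hn2, mul_pow, hn1]
      nlinarith [hd]
    exact (pow_le_pow_iff_left₀ (norm_nonneg _)
      (by positivity) two_ne_zero).mp h4
end

section
/- For every (x,y,z) ∈ ℝ³, the partial derivatives of u are ∂u/∂x = −sin(x)·e^{−z}, ∂u/∂y = 0, ∂u/∂z = −(1/3 + cos x)·e^{−z}, and moreover f(∂u/∂x, ∂u/∂z) = (1/3)·e^{−z}. -/
/-- `u(x,y,z) = (1/3 + cos x)·e^{−z}`. -/
noncomputable def u (x y z : ℝ) : ℝ := (1/3 + Real.cos x) * Real.exp (-z)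

/-- The partial derivatives of `u` are `∂u/∂x = −sin(x)·e^{−z}`, `∂u/∂y = 0`,
`∂u/∂z = −(1/3 + cos x)·e^{−z}`, and `f(∂u/∂x, ∂u/∂z) = (1/3)·e^{−z}`. -/
theorem stmt_4 (x y z : ℝ) :
    HasDerivAt (fun t => u t y z) (-Real.sin x * Real.exp (-z)) x ∧
    HasDerivAt (fun t => u x t z) 0 y ∧
    HasDerivAt (fun t => u x y t) (-(1/3 + Real.cos x) * Real.exp (-z)) z ∧
    f (-Real.sin x * Real.exp (-z)) (-(1/3 + Real.cos x) * Real.exp (-z))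
      = (1/3) * Real.exp (-z) := by
  refine ⟨?_, ?_, ?_, ?_⟩
  · have h : HasDerivAt (fun t : ℝ => (1/3 + Real.cos t) * Real.exp (-z))
        ((0 + -Real.sin x) * Real.exp (-z)) x :=
      (((hasDerivAt_const x (1/3:ℝ)).add (Real.hasDerivAt_cos x))).mul_const _
    simpa [u] using h
  · simpa [u] using hasDerivAt_const y ((1/3 + Real.cos x) * Real.exp (-z))
  · have h : HasDerivAt (fun t : ℝ => Real.exp (-t)) (-Real.exp (-z)) z := by
      simpa [Function.comp_def] using (Real.hasDerivAt_exp (-z)).comp z ((hasDerivAt_id z).neg)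
    have := h.const_mul (1/3 + Real.cos x)
    have heq : -(1/3 + Real.cos x) * Real.exp (-z)
        = (1/3 + Real.cos x) * -Real.exp (-z) := by ring
    rw [heq]
    simpa [u] using this
  · have hsq : 8 * (-Real.sin x * Real.exp (-z))^2
        + 9 * (-(1/3 + Real.cos x) * Real.exp (-z))^2
        = ((Real.cos x + 3) * Real.exp (-z))^2 := by
      have hs : Real.sin x ^ 2 = 1 - Real.cos x ^ 2 := by
        have := Real.sin_sq_add_cos_sq x; linarith
      ring_nf
      nlinarith [Real.sin_sq_add_cos_sq x, sq_nonneg (Real.exp (-z))]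
    have hpos : (0:ℝ) ≤ (Real.cos x + 3) * Real.exp (-z) := by
      have h1 := Real.neg_one_le_cos x
      have h2 := (Real.exp_pos (-z)).le
      nlinarith
    rw [f, hsq, Real.sqrt_sq hpos]
    ring
end

section
/- Let d ≥ 3 and α ∈ (0,1). Then there is a constant C = C(d, α) < ∞ such that for every t with 0 < t ≤ 1, writing points of ℝ^{d−1} as y = (y₁, y') with y₁ ∈ ℝ and y' ∈ ℝ^{d−2}, one has ∫_{ℝ^{d−1}} min(1, 1/|y₁|) · t^α · (t + ‖y‖)^{−(d−2+α)} dy ≤ C·t^α. -/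
open MeasureTheory Set Real Filter

private lemma integrable_near {q : ℝ} (h0 : 0 < q) (h1 : q < 1) :
    Integrable (fun x : ℝ => if |x| ≤ 1 then |x| ^ (-q) else 0) := by
  have hrpow : IntegrableOn (fun x : ℝ => x ^ (-q)) (Ioc 0 1) := by
    have h2 := intervalIntegral.intervalIntegrable_rpow'
      (a := 0) (b := 1) (by linarith : (-1 : ℝ) < -q)
    rwa [intervalIntegrable_iff_integrableOn_Ioc_of_le zero_le_one] at h2
  have hind : Integrable ((Ioc (0:ℝ) 1).indicator fun x => x ^ (-q)) :=
    (integrable_indicator_iff measurableSet_Ioc).2 hrpow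
  have heq : (fun x : ℝ => if |x| ≤ 1 then |x| ^ (-q) else 0)
      = fun x => (Ioc (0:ℝ) 1).indicator (fun x => x ^ (-q)) x
        + (Ioc (0:ℝ) 1).indicator (fun x => x ^ (-q)) (-x) := by
    funext x
    simp only [Set.indicator_apply, mem_Ioc]
    rcases lt_trichotomy x 0 with hx | rfl | hx
    · rw [abs_of_neg hx,
        if_neg (show ¬(0 < x ∧ x ≤ 1) from fun h => absurd h.1 (not_lt.2 hx.le)), zero_add]
      by_cases h4 : -x ≤ 1
      · rw [if_pos h4, if_pos (show 0 < -x ∧ -x ≤ 1 from ⟨neg_pos.2 hx, h4⟩)]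
      · rw [if_neg h4, if_neg (show ¬(0 < -x ∧ -x ≤ 1) from fun h => h4 h.2)]
    · simp [Real.zero_rpow (show -q ≠ 0 by linarith)]
    · rw [abs_of_pos hx,
        if_neg (show ¬(0 < -x ∧ -x ≤ 1) from fun h => absurd h.1 (by linarith)), add_zero]
      by_cases h4 : x ≤ 1
      · rw [if_pos h4, if_pos (show 0 < x ∧ x ≤ 1 from ⟨hx, h4⟩)]
      · rw [if_neg h4, if_neg (show ¬(0 < x ∧ x ≤ 1) from fun h => h4 h.2)]
  rw [heq]
  exact hind.add hind.comp_neg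

private lemma integrable_far {s : ℝ} (h1 : 1 < s) :
    Integrable (fun x : ℝ => if 1 ≤ |x| then |x| ^ (-s) else 0) := by
  have hrpow : IntegrableOn (fun x : ℝ => x ^ (-s)) (Ici 1) := by
    rw [integrableOn_Ici_iff_integrableOn_Ioi]
    exact integrableOn_Ioi_rpow_of_lt (by linarith) one_pos
  have hind : Integrable ((Ici (1:ℝ)).indicator fun x => x ^ (-s)) :=
    (integrable_indicator_iff measurableSet_Ici).2 hrpow
  have heq : (fun x : ℝ => if 1 ≤ |x| then |x| ^ (-s) else 0)
      = fun x => (Ici (1:ℝ)).indicator (fun x => x ^ (-s)) x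
        + (Ici (1:ℝ)).indicator (fun x => x ^ (-s)) (-x) := by
    funext x
    simp only [Set.indicator_apply, mem_Ici]
    rcases le_or_gt 1 |x| with h4 | h4
    · rw [if_pos h4]
      rcases abs_cases x with ⟨he, hx⟩ | ⟨he, hx⟩
      · rw [he] at h4
        rw [he, if_pos h4, if_neg (by linarith), add_zero]
      · rw [he] at h4
        rw [he, if_neg (by linarith), if_pos h4, zero_add]
    · rw [if_neg (not_le.2 h4)]
      rw [abs_lt] at h4
      rw [if_neg (by linarith), if_neg (by linarith), add_zero]
  rw [heq]
  exact hind.add hind.comp_neg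

private lemma integrable_G {β : ℝ} (h0 : 0 < β) (h1 : β < 1) :
    Integrable (fun a : ℝ => (max 1 |a|)⁻¹ * |a| ^ (-β)) := by
  have hnear := integrable_near h0 h1
  have hfar := integrable_far (s := 1 + β) (by linarith)
  refine (hnear.add hfar).mono' (Measurable.aestronglyMeasurable (by fun_prop))
    (Filter.Eventually.of_forall fun a => ?_)
  have h2 : (0:ℝ) ≤ (max 1 |a|)⁻¹ * |a| ^ (-β) := by positivity
  rw [Real.norm_eq_abs, abs_of_nonneg h2]
  rcases le_total |a| 1 with h3 | h3
  · rw [max_eq_left h3, inv_one, one_mul]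
    have h4 : (0:ℝ) ≤ if 1 ≤ |a| then |a| ^ (-(1+β)) else 0 := by
      split_ifs <;> positivity
    calc |a| ^ (-β) = (if |a| ≤ 1 then |a| ^ (-β) else 0) := by rw [if_pos h3]
      _ ≤ _ := le_add_of_nonneg_right h4
  · have ha : (0:ℝ) < |a| := lt_of_lt_of_le one_pos h3
    rw [max_eq_right h3]
    have h5 : |a|⁻¹ * |a| ^ (-β) = |a| ^ (-(1+β)) := by
      have he : -(1+β) = (-1) + (-β) := by ring
      rw [he, Real.rpow_add ha, Real.rpow_neg_one]
    rw [h5]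
    have h4 : (0:ℝ) ≤ if |a| ≤ 1 then |a| ^ (-β) else 0 := by
      split_ifs <;> positivity
    calc |a| ^ (-(1+β)) = (if 1 ≤ |a| then |a| ^ (-(1+β)) else 0) := by rw [if_pos h3]
      _ ≤ _ := le_add_of_nonneg_left h4

private lemma coord_abs_le_norm {n : ℕ} (y : EuclideanSpace ℝ (Fin n)) (i : Fin n) :
    |y i| ≤ ‖y‖ := by
  rw [EuclideanSpace.norm_eq]
  calc |y i| = ‖y i‖ := (Real.norm_eq_abs _).symm
    _ = Real.sqrt (‖y i‖ ^ 2) := (Real.sqrt_sq (norm_nonneg _)).symm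
    _ ≤ Real.sqrt (∑ j, ‖y j‖ ^ 2) := Real.sqrt_le_sqrt
        (Finset.single_le_sum (fun j _ => sq_nonneg ‖y j‖) (Finset.mem_univ i))

private lemma ae_coords_ne_zero (n : ℕ) :
    ∀ᵐ y : EuclideanSpace ℝ (Fin n), ∀ i, y i ≠ 0 := by
  rw [ae_all_iff]
  intro i
  rw [ae_iff]
  have hset : {y : EuclideanSpace ℝ (Fin n) | ¬ y i ≠ 0}
      = (LinearMap.ker (EuclideanSpace.projₗ (𝕜 := ℝ) i) : Set (EuclideanSpace ℝ (Fin n))) := by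
    ext y
    simp [LinearMap.mem_ker]
  rw [hset]
  refine Measure.addHaar_submodule _ _ ?_
  intro h
  have h2 : EuclideanSpace.single i (1:ℝ) ∈
      LinearMap.ker (EuclideanSpace.projₗ (𝕜 := ℝ) i) := by rw [h]; trivial
  rw [LinearMap.mem_ker] at h2
  simp [EuclideanSpace.single_apply] at h2

private lemma stmt_aux (k : ℕ) {α : ℝ} (hα0 : 0 < α) (hα1 : α < 1) :
    ∃ C : ℝ, ∀ t : ℝ, 0 < t → t ≤ 1 →
      ∫ y : EuclideanSpace ℝ (Fin (k + 2)),
        (if y 0 = 0 then 1 else min 1 (1 / |y 0|)) * t ^ α *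
          (t + ‖y‖) ^ (-((k : ℝ) + 1 + α)) ≤ C * t ^ α := by
  have hk0 : (0:ℝ) ≤ (k:ℝ) := Nat.cast_nonneg k
  set p : ℝ := (k : ℝ) + 1 + α with hp
  set β₁ : ℝ := (1 + α) / 2 with hβ₁
  set q : ℝ := ((k : ℝ) + (1 + α) / 2) / ((k : ℝ) + 1) with hq
  set β₂ : ℝ := α / 2 with hβ₂
  set γ₂ : ℝ := (k : ℝ) + 1 + α / 2 with hγ₂
  have hk1 : (0:ℝ) < (k:ℝ) + 1 := by linarith
  have hppos : 0 < p := by rw [hp]; linarith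
  have hβ₁0 : 0 < β₁ := by rw [hβ₁]; linarith
  have hβ₁1 : β₁ < 1 := by rw [hβ₁]; linarith
  have hβ₂0 : 0 < β₂ := by rw [hβ₂]; linarith
  have hβ₂1 : β₂ < 1 := by rw [hβ₂]; linarith
  have hγ₂0 : 0 < γ₂ := by rw [hγ₂]; linarith
  have hq0 : 0 < q := by
    rw [hq]; apply div_pos; · linarith
    · exact hk1
  have hq1 : q < 1 := by rw [hq, div_lt_one hk1]; linarith
  have hqsum : β₁ + ((k:ℝ) + 1) * q = p := by
    rw [hβ₁, hq, hp]
    field_simp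
    ring
  have hbsum : β₂ + γ₂ = p := by rw [hβ₂, hγ₂, hp]; ring
  set G : ℝ → ℝ → ℝ := fun β a => (max 1 |a|)⁻¹ * |a| ^ (-β) with hG
  set H : ℝ → ℝ := fun x => if |x| ≤ 1 then |x| ^ (-q) else 0 with hH
  set J : (Fin (k+1) → ℝ) → ℝ := fun b => (2:ℝ) ^ γ₂ * (1 + ‖b‖) ^ (-γ₂) with hJ
  set Φ : ℝ × (Fin (k+1) → ℝ) → ℝ :=
    fun z => G β₁ z.1 * ∏ j, H (z.2 j) + G β₂ z.1 * J z.2 with hΦ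
  -- integrability of the dominating function
  have hHint : Integrable H := integrable_near hq0 hq1
  have hJint : Integrable J := by
    apply Integrable.const_mul
    apply integrable_one_add_norm (E := Fin (k+1) → ℝ)
    rw [hγ₂]
    simp only [Module.finrank_pi, Fintype.card_fin]
    push_cast
    linarith
  have hprod : Integrable (fun b : Fin (k+1) → ℝ => ∏ j, H (b j)) :=
    Integrable.fintype_prod (f := fun _ : Fin (k+1) => H) fun _ => hHint
  have hΦint : Integrable Φ :=
    ((integrable_G hβ₁0 hβ₁1).mul_prod hprod).add
      ((integrable_G hβ₂0 hβ₂1).mul_prod hJint)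
  set e1 := (MeasurableEquiv.toLp 2 (Fin (k+2) → ℝ)).symm with he1
  set e2 := MeasurableEquiv.piFinSuccAbove (fun _ : Fin (k+2) => ℝ) 0 with he2
  set D : EuclideanSpace ℝ (Fin (k+2)) → ℝ := fun y => Φ (e2 (e1 y)) with hD
  have hmp : MeasurePreserving (⇑e2 ∘ ⇑e1) volume volume :=
    (volume_preserving_piFinSuccAbove (fun _ : Fin (k+2) => ℝ) 0).comp
      (EuclideanSpace.volume_preserving_symm_measurableEquiv_toLp (Fin (k+2)))
  have hDint : Integrable D :=
    (hmp.integrable_comp_emb (e2.measurableEmbedding.comp e1.measurableEmbedding)).2 hΦint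
  -- nonnegativity
  have hGnn : ∀ β a, 0 ≤ G β a := fun β a => by rw [hG]; positivity
  have hHnn : ∀ x, 0 ≤ H x := fun x => by rw [hH]; dsimp only; split_ifs <;> positivity
  have hJnn : ∀ b, 0 ≤ J b := fun b => by rw [hJ]; positivity
  -- key pointwise bound
  have key : ∀ t : ℝ, 0 < t → ∀ y : EuclideanSpace ℝ (Fin (k+2)), (∀ i, y i ≠ 0) →
      (if y 0 = 0 then 1 else min 1 (1 / |y 0|)) * t ^ α * (t + ‖y‖) ^ (-p)
        ≤ t ^ α * D y := by
    intro t ht y hy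
    set a : ℝ := y 0 with ha
    set b : Fin (k+1) → ℝ := fun j => y ((0 : Fin (k+2)).succAbove j) with hb
    have hD' : D y = G β₁ a * ∏ j, H (b j) + G β₂ a * J b := rfl
    have ha0 : a ≠ 0 := hy 0
    have haabs : 0 < |a| := abs_pos.2 ha0
    have hyne : y ≠ 0 := fun h => ha0 (by rw [ha, h]; rfl)
    have hynorm : 0 < ‖y‖ := norm_pos_iff.2 hyne
    have habs : |a| ≤ ‖y‖ := coord_abs_le_norm y 0
    have hbj : ∀ j, |b j| ≤ ‖y‖ := fun j => coord_abs_le_norm y _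
    have hbjn : ∀ j, 0 < |b j| := fun j => abs_pos.2 (hy _)
    have hbnorm : ‖b‖ ≤ ‖y‖ := by
      rw [pi_norm_le_iff_of_nonneg (norm_nonneg y)]
      intro j
      rw [Real.norm_eq_abs]
      exact hbj j
    have hG0nn : (0:ℝ) ≤ (max 1 |a|)⁻¹ := by positivity
    have hm : (if y 0 = 0 then 1 else min 1 (1 / |y 0|)) = (max 1 |a|)⁻¹ := by
      rw [← ha, if_neg ha0, one_div]
      rcases le_total |a| 1 with h | h
      · rw [max_eq_left h, inv_one, min_eq_left]
        exact (one_le_inv_iff₀.2 ⟨haabs, h⟩ : (1:ℝ) ≤ |a|⁻¹)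
      · rw [max_eq_right h, min_eq_right]
        exact inv_le_one_of_one_le₀ h
    have hstep1 : (t + ‖y‖) ^ (-p) ≤ ‖y‖ ^ (-p) :=
      Real.rpow_le_rpow_of_nonpos hynorm (by linarith) (by linarith)
    have hcore : (max 1 |a|)⁻¹ * ‖y‖ ^ (-p) ≤ D y := by
      by_cases hble : ‖b‖ ≤ 1
      · -- near regime
        have hHb : ∀ j, H (b j) = |b j| ^ (-q) := fun j => by
          rw [hH]
          dsimp only
          rw [if_pos (le_trans (le_trans (Real.norm_eq_abs (b j) ▸ norm_le_pi_norm b j) hble) le_rfl)]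
        have hA : |a| ^ β₁ * ∏ j, |b j| ^ q ≤ ‖y‖ ^ p := by
          calc |a| ^ β₁ * ∏ j, |b j| ^ q
              ≤ ‖y‖ ^ β₁ * ∏ j : Fin (k+1), ‖y‖ ^ q := by
                apply mul_le_mul (Real.rpow_le_rpow (abs_nonneg a) habs hβ₁0.le)
                · exact Finset.prod_le_prod
                    (fun j _ => Real.rpow_nonneg (abs_nonneg _) q)
                    (fun j _ => Real.rpow_le_rpow (abs_nonneg _) (hbj j) hq0.le)
                · exact Finset.prod_nonneg fun j _ => Real.rpow_nonneg (abs_nonneg _) q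
                · exact Real.rpow_nonneg (norm_nonneg y) β₁
            _ = ‖y‖ ^ p := by
                rw [Finset.prod_const, Finset.card_univ, Fintype.card_fin,
                  ← Real.rpow_natCast (‖y‖ ^ q) (k+1), ← Real.rpow_mul (norm_nonneg y),
                  ← Real.rpow_add hynorm]
                congr 1
                push_cast
                rw [← hqsum]
                ring
        have hApos : 0 < |a| ^ β₁ * ∏ j, |b j| ^ q :=
          mul_pos (Real.rpow_pos_of_pos haabs β₁)
            (Finset.prod_pos fun j _ => Real.rpow_pos_of_pos (hbjn j) q)
        have h6 : ‖y‖ ^ (-p) ≤ |a| ^ (-β₁) * ∏ j, |b j| ^ (-q) := by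
          have hpr : ∏ j : Fin (k+1), |b j| ^ (-q) = (∏ j : Fin (k+1), |b j| ^ q)⁻¹ := by
            rw [← Finset.prod_inv_distrib]
            exact Finset.prod_congr rfl fun j _ => by
              rw [Real.rpow_neg (abs_nonneg _)]
          rw [Real.rpow_neg (norm_nonneg y), Real.rpow_neg (abs_nonneg a), hpr, ← mul_inv]
          exact inv_anti₀ hApos hA
        rw [hD']
        refine le_trans ?_ (le_add_of_nonneg_right (mul_nonneg (hGnn β₂ a) (hJnn b)))
        have hE : G β₁ a * ∏ j, H (b j)
            = (max 1 |a|)⁻¹ * (|a| ^ (-β₁) * ∏ j, |b j| ^ (-q)) := by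
          rw [Finset.prod_congr rfl (fun j _ => hHb j), hG]
          ring
        rw [hE]
        exact mul_le_mul_of_nonneg_left h6 hG0nn
      · -- far regime
        have hb1 : (1:ℝ) < ‖b‖ := not_le.1 hble
        have hbpos : (0:ℝ) < ‖b‖ := lt_trans one_pos hb1
        have h7 : ‖y‖ ^ (-p) = ‖y‖ ^ (-β₂) * ‖y‖ ^ (-γ₂) := by
          rw [← Real.rpow_add hynorm]
          congr 1
          rw [← hbsum]
          ring
        have h8 : ‖y‖ ^ (-β₂) ≤ |a| ^ (-β₂) :=
          Real.rpow_le_rpow_of_nonpos haabs habs (by linarith)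
        have h9 : ‖y‖ ^ (-γ₂) ≤ ‖b‖ ^ (-γ₂) :=
          Real.rpow_le_rpow_of_nonpos hbpos hbnorm (by linarith)
        have h12 : ‖b‖ ^ (-γ₂) ≤ ((1 + ‖b‖)/2) ^ (-γ₂) :=
          Real.rpow_le_rpow_of_nonpos (by linarith) (by linarith) (by linarith)
        have h13 : ((1 + ‖b‖)/2) ^ (-γ₂) = J b := by
          rw [hJ]
          dsimp only
          rw [Real.div_rpow (by linarith) (by norm_num : (0:ℝ) ≤ 2),
            Real.rpow_neg (by norm_num : (0:ℝ) ≤ 2), div_eq_mul_inv, inv_inv, mul_comm]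
        have h10 : ‖b‖ ^ (-γ₂) ≤ J b := h12.trans_eq h13
        rw [hD']
        refine le_trans ?_ (le_add_of_nonneg_left (mul_nonneg (hGnn β₁ a)
          (Finset.prod_nonneg fun j _ => hHnn _)))
        have h14 : ‖y‖ ^ (-p) ≤ |a| ^ (-β₂) * J b := by
          rw [h7]
          exact mul_le_mul h8 (h9.trans h10) (Real.rpow_nonneg (norm_nonneg y) _)
            (Real.rpow_nonneg (abs_nonneg a) _)
        have hE : G β₂ a * J b = (max 1 |a|)⁻¹ * (|a| ^ (-β₂) * J b) := by
          rw [hG]; ring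
        rw [hE]
        exact mul_le_mul_of_nonneg_left h14 hG0nn
    calc (if y 0 = 0 then 1 else min 1 (1 / |y 0|)) * t ^ α * (t + ‖y‖) ^ (-p)
        = t ^ α * ((max 1 |a|)⁻¹ * (t + ‖y‖) ^ (-p)) := by rw [hm]; ring
      _ ≤ t ^ α * ((max 1 |a|)⁻¹ * ‖y‖ ^ (-p)) :=
          mul_le_mul_of_nonneg_left (mul_le_mul_of_nonneg_left hstep1 hG0nn)
            (Real.rpow_nonneg ht.le α)
      _ ≤ t ^ α * D y := mul_le_mul_of_nonneg_left hcore (Real.rpow_nonneg ht.le α)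
  -- conclusion
  refine ⟨∫ y, D y, fun t ht ht1 => ?_⟩
  have hmeas : AEStronglyMeasurable (fun y : EuclideanSpace ℝ (Fin (k+2)) =>
      (if y 0 = 0 then 1 else min 1 (1 / |y 0|)) * t ^ α * (t + ‖y‖) ^ (-p)) volume := by
    apply Measurable.aestronglyMeasurable
    apply Measurable.mul
    apply Measurable.mul
    · exact Measurable.ite (((measurable_pi_apply 0).comp (PiLp.volume_preserving_ofLp (Fin (k+2))).measurable) (measurableSet_singleton 0))
        measurable_const (by fun_prop)
    · exact measurable_const
    · exact ((continuous_const.add continuous_norm).rpow_const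
        fun y => Or.inl (ne_of_gt (show (0:ℝ) < t + ‖y‖ by have := norm_nonneg y; linarith))).measurable
  have hnn : ∀ y : EuclideanSpace ℝ (Fin (k+2)),
      0 ≤ (if y 0 = 0 then 1 else min 1 (1 / |y 0|)) * t ^ α * (t + ‖y‖) ^ (-p) := by
    intro y
    have h1 : (0:ℝ) ≤ (if y 0 = 0 then 1 else min 1 (1 / |y 0|)) := by
      split_ifs with h
      · norm_num
      · positivity
    exact mul_nonneg (mul_nonneg h1 (Real.rpow_nonneg ht.le α))
      (Real.rpow_nonneg (by positivity) _)
  have hbound : ∀ᵐ y : EuclideanSpace ℝ (Fin (k+2)),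
      ‖(if y 0 = 0 then 1 else min 1 (1 / |y 0|)) * t ^ α * (t + ‖y‖) ^ (-p)‖
        ≤ t ^ α * D y := by
    filter_upwards [ae_coords_ne_zero (k+2)] with y hy
    rw [Real.norm_eq_abs, abs_of_nonneg (hnn y)]
    exact key t ht y hy
  have hint : Integrable (fun y : EuclideanSpace ℝ (Fin (k+2)) =>
      (if y 0 = 0 then 1 else min 1 (1 / |y 0|)) * t ^ α * (t + ‖y‖) ^ (-p)) :=
    (hDint.const_mul (t ^ α)).mono' hmeas hbound
  have hbound2 : ∀ᵐ y : EuclideanSpace ℝ (Fin (k+2)),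
      (if y 0 = 0 then 1 else min 1 (1 / |y 0|)) * t ^ α * (t + ‖y‖) ^ (-p)
        ≤ t ^ α * D y := by
    filter_upwards [hbound] with y h
    exact le_trans (le_abs_self _) (by rwa [Real.norm_eq_abs] at h)
  calc ∫ y : EuclideanSpace ℝ (Fin (k+2)),
        (if y 0 = 0 then 1 else min 1 (1 / |y 0|)) * t ^ α * (t + ‖y‖) ^ (-p)
      ≤ ∫ y, t ^ α * D y := integral_mono_ae hint (hDint.const_mul _) hbound2
    _ = t ^ α * ∫ y, D y := integral_const_mul _ _
    _ = (∫ y, D y) * t ^ α := mul_comm _ _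

/-- For `d ≥ 3` and `α ∈ (0,1)` there is `C = C(d,α) < ∞` such that for every `0 < t ≤ 1`,
writing `y = (y₁, y') ∈ ℝ^{d−1}`,
`∫_{ℝ^{d−1}} min(1, 1/|y₁|)·t^α·(t + ‖y‖)^{−(d−2+α)} dy ≤ C·t^α`,
where `min(1, 1/|y₁|)` is interpreted as `1` when `y₁ = 0`. -/
theorem stmt_15 (d : ℕ) (hd : 3 ≤ d) (α : ℝ) (hα0 : 0 < α) (hα1 : α < 1) :
    ∃ C : ℝ, ∀ t : ℝ, 0 < t → t ≤ 1 →
      ∫ y : EuclideanSpace ℝ (Fin (d - 1)),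
        (if y ⟨0, by omega⟩ = 0 then 1 else min 1 (1 / |y ⟨0, by omega⟩|)) * t ^ α *
          (t + ‖y‖) ^ (-((d : ℝ) - 2 + α)) ≤ C * t ^ α := by
  obtain ⟨k, rfl⟩ : ∃ k, d = k + 3 := ⟨d - 3, by omega⟩
  obtain ⟨C, hC⟩ := stmt_aux k hα0 hα1
  refine ⟨C, fun t ht ht1 => ?_⟩
  have hexp : ((k + 3 : ℕ) : ℝ) - 2 + α = (k : ℝ) + 1 + α := by push_cast; ring
  simp only [hexp]
  exact hC t ht ht1
end
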